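/- arXiv:0812.3146 — 2 statements merged into one kernel-verified Lean document; each statement's English description precedes it below -/
import Mathlib

section
/- Let p ≥ 1 be an integer and a, b, c real numbers. Define the differential operator G = ∑_{i=1}^{p} [(x_i² + a·x_i + b)·∂²/∂x_i² + (−(2/3)(p−2)·x_i + c)·∂/∂x_i]. Then G applied to the Vandermonde polynomial V(x_1,…,x_p) = ∏_{1 ≤ i < j ≤ p}(x_j − x_i) is identically zero: G V = 0. -/
open Finset

/-- The Vandermonde polynomial `V(x_1,…,x_p) = ∏_{1 ≤ i < j ≤ p}(x_j − x_i)`. -/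
noncomputable def vandR (p : ℕ) (x : Fin p → ℝ) : ℝ :=
  ∏ i : Fin p, ∏ j ∈ Finset.univ.filter (fun j : Fin p => i < j), (x j - x i)

/-!
At a point `x` with distinct coordinates, `t ↦ V(x₁,…,t,…,x_p)` is a constant multiple of
`∏_{j ≠ i} (t - x_j)`, so `∂ᵢV = V · Σ_{j≠i} 1/(xᵢ-xⱼ)` and
`∂ᵢ²V = V · Σ_{j≠k, both ≠ i} 1/((xᵢ-xⱼ)(xᵢ-xₖ))`. Write `m` for the drift coefficient.
Symmetrizing over ordered pairs, the drift part of `G V / V` is `m·p(p-1)/2`; symmetrizing over ordered triples and using the Lagrange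
interpolation identity `Σ_cyc f(u)/((u-v)(u-w)) = 1` for monic quadratic `f`, the diffusion part is
`p(p-1)(p-2)/3`. With `m = -(2/3)(p-2)` these cancel. Finally `G V` is a polynomial `Q`, and
`Q · V` vanishes identically since `V` vanishes off the points with distinct coordinates; as
`V ≠ 0`, `Q = 0`.
-/

namespace MvPolynomial

section Calculus

variable {𝕜 ι : Type*} [NontriviallyNormedField 𝕜] [DecidableEq ι]

theorem hasDerivAt_eval_update (P : MvPolynomial ι 𝕜) (x : ι → 𝕜) (i : ι) (t : 𝕜) :
    HasDerivAt (fun s => eval (Function.update x i s) P)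
      (eval (Function.update x i t) (pderiv i P)) t := by
  induction P using MvPolynomial.induction_on with
  | C a => simpa using hasDerivAt_const t a
  | add P Q hP hQ => simpa using hP.fun_add hQ
  | mul_X P k hP =>
    have hX : HasDerivAt (fun s => Function.update x i s k)
        (eval (Function.update x i t) (pderiv i (X k))) t := by
      rcases eq_or_ne k i with rfl | hk
      · simpa using hasDerivAt_id' t
      · simpa [Function.update_of_ne hk, pderiv_X_of_ne hk] using hasDerivAt_const t (x k)
    simpa [pderiv_mul, add_comm, mul_comm] using hP.fun_mul hX

theorem deriv_eval_update (P : MvPolynomial ι 𝕜) (x : ι → 𝕜) (i : ι) :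
    deriv (fun s => eval (Function.update x i s) P)
      = fun t => eval (Function.update x i t) (pderiv i P) :=
  _root_.funext fun t => (hasDerivAt_eval_update P x i t).deriv

theorem iteratedDeriv_two_eval_update (P : MvPolynomial ι 𝕜) (x : ι → 𝕜) (i : ι) :
    iteratedDeriv 2 (fun s => eval (Function.update x i s) P) (x i)
      = eval x (pderiv i (pderiv i P)) := by
  rw [iteratedDeriv_succ, iteratedDeriv_one, deriv_eval_update, deriv_eval_update]
  simp only [Function.update_eq_self]

end Calculus

theorem eq_zero_of_eval_eq_zero_of_eval_ne_zero {R σ : Type*} [CommRing R] [IsDomain R]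
    [Infinite R] {P Q : MvPolynomial σ R} (hP : P ≠ 0)
    (h : ∀ x, eval x P ≠ 0 → eval x Q = 0) : Q = 0 := by
  have hQP : Q * P = 0 := funext fun x => by
    by_cases hx : eval x P = 0 <;> simp [hx, h x]
  exact (mul_eq_zero.mp hQP).resolve_right hP

end MvPolynomial

open MvPolynomial

section Operator

variable {ι : Type*} [Fintype ι] [DecidableEq ι]

/-- The operator `G` with drift coefficient `-(2/3)(p-2)` replaced by an arbitrary `m`. -/
noncomputable def diffOp (a b m c : ℝ) (f : (ι → ℝ) → ℝ) (x : ι → ℝ) : ℝ :=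
  ∑ i, ((x i ^ 2 + a * x i + b) * iteratedDeriv 2 (fun t => f (Function.update x i t)) (x i)
    + (m * x i + c) * deriv (fun t => f (Function.update x i t)) (x i))

noncomputable def diffOpPoly {R : Type*} [CommRing R] (a b m c : R) (P : MvPolynomial ι R) :
    MvPolynomial ι R :=
  ∑ i, ((X i ^ 2 + C a * X i + C b) * pderiv i (pderiv i P) + (C m * X i + C c) * pderiv i P)

theorem diffOp_eval (a b m c : ℝ) (P : MvPolynomial ι ℝ) (x : ι → ℝ) :
    diffOp a b m c (fun y => eval y P) x = eval x (diffOpPoly a b m c P) := by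
  simp [diffOp, diffOpPoly, iteratedDeriv_two_eval_update, deriv_eval_update]

end Operator

section Symmetrization

variable {ι M : Type*} [DecidableEq ι] [AddCommMonoid M]

theorem sum_sum_erase_comm (s : Finset ι) (F : ι → ι → M) :
    ∑ i ∈ s, ∑ j ∈ s.erase i, F i j = ∑ i ∈ s, ∑ j ∈ s.erase i, F j i :=
  sum_comm' fun i j => by simp only [mem_erase]; tauto

variable [Fintype ι]

theorem sum_sum_sum_erase_swap_left (F : ι → ι → ι → M) :
    ∑ i, ∑ j ∈ univ.erase i, ∑ k ∈ (univ.erase i).erase j, F i j k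
      = ∑ i, ∑ j ∈ univ.erase i, ∑ k ∈ (univ.erase i).erase j, F j i k := by
  rw [sum_sum_erase_comm]
  simp only [erase_right_comm]

theorem sum_sum_sum_erase_swap_right (F : ι → ι → ι → M) :
    ∑ i, ∑ j ∈ univ.erase i, ∑ k ∈ (univ.erase i).erase j, F i j k
      = ∑ i, ∑ j ∈ univ.erase i, ∑ k ∈ (univ.erase i).erase j, F i k j :=
  sum_congr rfl fun _ _ => sum_sum_erase_comm _ _

end Symmetrization

section Field

variable {K ι : Type*} [Field K] [Fintype ι] [DecidableEq ι] {x : ι → K}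

theorem natCast_card_univ_erase (i : ι) : (#(univ.erase i) : K) = Fintype.card ι - 1 := by
  rw [card_erase_of_mem (mem_univ i), card_univ, Nat.cast_sub (Fintype.card_pos_iff.mpr ⟨i⟩),
    Nat.cast_one]

theorem two_mul_sum_mul_sum_inv_sub (hx : Function.Injective x) (m c : K) :
    2 * ∑ i, (m * x i + c) * ∑ j ∈ univ.erase i, (x i - x j)⁻¹
      = m * (Fintype.card ι * (Fintype.card ι - 1)) := by
  have hpair : ∀ i, ∀ j ∈ univ.erase i,
      (m * x i + c) * (x i - x j)⁻¹ + (m * x j + c) * (x j - x i)⁻¹ = m := by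
    intro i j hj
    have hij : x i - x j ≠ 0 := sub_ne_zero.mpr (hx.ne (ne_of_mem_erase hj).symm)
    have hji : x j - x i ≠ 0 := sub_ne_zero.mpr (hx.ne (ne_of_mem_erase hj))
    field_simp
    ring
  calc 2 * ∑ i, (m * x i + c) * ∑ j ∈ univ.erase i, (x i - x j)⁻¹
      = ∑ i, ∑ j ∈ univ.erase i,
          ((m * x i + c) * (x i - x j)⁻¹ + (m * x j + c) * (x j - x i)⁻¹) := by
        simp only [mul_sum, two_mul, sum_add_distrib]
        congr 1
        exact sum_sum_erase_comm univ fun i j => (m * x i + c) * (x i - x j)⁻¹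
    _ = ∑ i, ∑ j ∈ univ.erase i, m := sum_congr rfl fun i _ => sum_congr rfl (hpair i)
    _ = m * (Fintype.card ι * (Fintype.card ι - 1)) := by
        simp only [sum_const, natCast_card_univ_erase, nsmul_eq_mul, card_univ]
        ring

theorem lagrange_three {u v w : K} (huv : u ≠ v) (huw : u ≠ w) (hvw : v ≠ w) (a b : K) :
    (u ^ 2 + a * u + b) * ((u - v) * (u - w))⁻¹ + (v ^ 2 + a * v + b) * ((v - u) * (v - w))⁻¹
      + (w ^ 2 + a * w + b) * ((w - u) * (w - v))⁻¹ = 1 := by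
  have := sub_ne_zero.mpr huv
  have := sub_ne_zero.mpr huw
  have := sub_ne_zero.mpr hvw
  field_simp
  ring

theorem three_mul_sum_mul_sum_sum_inv_sub (hx : Function.Injective x) (a b : K) :
    3 * ∑ i, (x i ^ 2 + a * x i + b) *
        ∑ j ∈ univ.erase i, ∑ k ∈ (univ.erase i).erase j, ((x i - x j) * (x i - x k))⁻¹
      = Fintype.card ι * (Fintype.card ι - 1) * (Fintype.card ι - 2) := by
  set H : ι → ι → ι → K := fun i j k => (x i ^ 2 + a * x i + b) * ((x i - x j) * (x i - x k))⁻¹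
  have htriple : ∀ i, ∀ j ∈ univ.erase i, ∀ k ∈ (univ.erase i).erase j,
      H i j k + H j i k + H k i j = 1 := by
    intro i j hj k hk
    have hji := ne_of_mem_erase hj
    have hkj := ne_of_mem_erase hk
    have hki := ne_of_mem_erase (mem_of_mem_erase hk)
    exact lagrange_three (hx.ne hji.symm) (hx.ne hki.symm) (hx.ne hkj.symm) a b
  have hcard : ∀ i : ι, ∀ j ∈ univ.erase i,
      (#((univ.erase i).erase j) : K) = Fintype.card ι - 2 := by
    intro i j hj
    rw [card_erase_of_mem hj, Nat.cast_sub (card_pos.mpr ⟨j, hj⟩), natCast_card_univ_erase]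
    ring
  have hS : ∑ i, (x i ^ 2 + a * x i + b) *
        ∑ j ∈ univ.erase i, ∑ k ∈ (univ.erase i).erase j, ((x i - x j) * (x i - x k))⁻¹
      = ∑ i, ∑ j ∈ univ.erase i, ∑ k ∈ (univ.erase i).erase j, H i j k := by
    simp only [H, mul_sum]
  have hswap_left := sum_sum_sum_erase_swap_left H
  have hswap_right := sum_sum_sum_erase_swap_right fun i j k => H j i k
  calc 3 * ∑ i, (x i ^ 2 + a * x i + b) *
        ∑ j ∈ univ.erase i, ∑ k ∈ (univ.erase i).erase j, ((x i - x j) * (x i - x k))⁻¹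
      = ∑ i, ∑ j ∈ univ.erase i, ∑ k ∈ (univ.erase i).erase j, (H i j k + H j i k + H k i j) := by
        simp only [hS, sum_add_distrib]
        rw [← hswap_right, ← hswap_left]
        ring
    _ = ∑ i, ∑ j ∈ univ.erase i, ∑ k ∈ (univ.erase i).erase j, 1 :=
        sum_congr rfl fun i _ => sum_congr rfl fun j hj => sum_congr rfl (htriple i j hj)
    _ = Fintype.card ι * (Fintype.card ι - 1) * (Fintype.card ι - 2) := by
        rw [sum_congr rfl fun i _ => sum_congr rfl fun j hj => by
          rw [sum_const, nsmul_one, hcard i j hj]]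
        simp only [sum_const, natCast_card_univ_erase, nsmul_eq_mul, card_univ]
        ring

end Field

section ProdSub

variable {𝕜 ι : Type*} [NontriviallyNormedField 𝕜] [DecidableEq ι] (s : Finset ι) (r : ι → 𝕜)

theorem hasDerivAt_prod_sub (t : 𝕜) :
    HasDerivAt (fun t => ∏ j ∈ s, (t - r j)) (∑ j ∈ s, ∏ k ∈ s.erase j, (t - r k)) t := by
  simpa using HasDerivAt.fun_finsetProd fun j (_ : j ∈ s) => (hasDerivAt_id' t).sub_const (r j)

theorem deriv_prod_sub :
    deriv (fun t => ∏ j ∈ s, (t - r j)) = fun t => ∑ j ∈ s, ∏ k ∈ s.erase j, (t - r k) :=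
  funext fun t => (hasDerivAt_prod_sub s r t).deriv

theorem iteratedDeriv_two_prod_sub (t : 𝕜) :
    iteratedDeriv 2 (fun t => ∏ j ∈ s, (t - r j)) t
      = ∑ j ∈ s, ∑ k ∈ s.erase j, ∏ l ∈ (s.erase j).erase k, (t - r l) := by
  rw [iteratedDeriv_succ, iteratedDeriv_one, deriv_prod_sub]
  exact (HasDerivAt.fun_sum fun j _ => hasDerivAt_prod_sub (s.erase j) r t).deriv

theorem prod_erase_eq_mul_inv {K : Type*} [Field K] (g : ι → K) {j : ι} (hj : j ∈ s)
    (hg : g j ≠ 0) : ∏ k ∈ s.erase j, g k = (∏ k ∈ s, g k) * (g j)⁻¹ := by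
  rw [← mul_prod_erase s g hj]
  field_simp

variable {s r} {t : 𝕜}

theorem deriv_prod_sub_of_ne (ht : ∀ j ∈ s, t ≠ r j) :
    deriv (fun t => ∏ j ∈ s, (t - r j)) t = (∏ j ∈ s, (t - r j)) * ∑ j ∈ s, (t - r j)⁻¹ := by
  rw [deriv_prod_sub, mul_sum]
  exact sum_congr rfl fun j hj => prod_erase_eq_mul_inv s _ hj (sub_ne_zero.mpr (ht j hj))

theorem iteratedDeriv_two_prod_sub_of_ne (ht : ∀ j ∈ s, t ≠ r j) :
    iteratedDeriv 2 (fun t => ∏ j ∈ s, (t - r j)) t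
      = (∏ j ∈ s, (t - r j)) * ∑ j ∈ s, ∑ k ∈ s.erase j, ((t - r j) * (t - r k))⁻¹ := by
  rw [iteratedDeriv_two_prod_sub, mul_sum]
  refine sum_congr rfl fun j hj => ?_
  rw [mul_sum]
  refine sum_congr rfl fun k hk => ?_
  rw [prod_erase_eq_mul_inv _ _ hk (sub_ne_zero.mpr (ht k (mem_of_mem_erase hk))),
    prod_erase_eq_mul_inv _ _ hj (sub_ne_zero.mpr (ht j hj)), mul_inv]
  ring

end ProdSub

section Vandermonde

variable {p : ℕ}

theorem vandR_eq_det (x : Fin p → ℝ) : vandR p x = (Matrix.vandermonde x).det := by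
  rw [Matrix.det_vandermonde, vandR]
  simp [filter_lt_eq_Ioi]

theorem vandR_ne_zero_iff {x : Fin p → ℝ} : vandR p x ≠ 0 ↔ Function.Injective x := by
  rw [vandR_eq_det]
  exact Matrix.det_vandermonde_ne_zero_iff

noncomputable def vandermondePoly (R : Type*) [CommRing R] (p : ℕ) : MvPolynomial (Fin p) R :=
  ∏ i : Fin p, ∏ j ∈ univ.filter (i < ·), (X j - X i)

theorem eval_vandermondePoly (x : Fin p → ℝ) :
    eval x (vandermondePoly ℝ p) = vandR p x := by
  simp [vandermondePoly, vandR]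

theorem vandermondePoly_ne_zero : vandermondePoly ℝ p ≠ 0 := by
  intro h
  have hinj : Function.Injective fun i : Fin p => (i : ℝ) :=
    Nat.cast_injective.comp Fin.val_injective
  have := eval_vandermondePoly fun i : Fin p => (i : ℝ)
  rw [h, map_zero] at this
  exact vandR_ne_zero_iff.mpr hinj this.symm

theorem exists_vandR_update_eq (x : Fin p → ℝ) (i : Fin p) :
    ∃ R : ℝ, ∀ t, vandR p (Function.update x i t) = R * ∏ j ∈ univ.erase i, (t - x j) := by
  have factor : ∀ t, ∀ a b : Fin p, a < b →
      Function.update x i t b - Function.update x i t a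
        = (if b = i then t - x a else 1) * (if a = i then -(t - x b) else 1)
          * (if a = i ∨ b = i then 1 else x b - x a) := by
    intro t a b hab
    by_cases ha : a = i
    · subst ha; simp [hab.ne']
    · by_cases hb : b = i
      · subst hb; simp [ha]
      · simp [ha, hb]
  refine ⟨(-1) ^ #(univ.filter (i < ·)) *
    ∏ a, ∏ b ∈ univ.filter (a < ·), (if a = i ∨ b = i then 1 else x b - x a), fun t => ?_⟩
  rw [vandR, prod_congr rfl fun a _ => prod_congr rfl fun b hb =>
    factor t a b (mem_filter.mp hb).2]
  simp only [prod_mul_distrib, prod_ite_eq', prod_ite_irrel, prod_const_one]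
  have hsplit : ∏ j ∈ univ.erase i, (t - x j)
      = (∏ a with a < i, (t - x a)) * ∏ b with i < b, (t - x b) := by
    rw [← prod_filter_mul_prod_filter_not (univ.erase i) (· < i)]
    congr 2 <;> ext j <;> simp only [mem_filter, mem_erase, mem_univ, and_true, true_and] <;> grind
  simp only [mem_filter, mem_univ, true_and, if_true, ← prod_filter, prod_neg, hsplit]
  ring

variable {x : Fin p → ℝ}

theorem deriv_vandR_update (hx : Function.Injective x) (i : Fin p) :
    deriv (fun t => vandR p (Function.update x i t)) (x i)
      = vandR p x * ∑ j ∈ univ.erase i, (x i - x j)⁻¹ := by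
  obtain ⟨R, hR⟩ := exists_vandR_update_eq x i
  have hV : vandR p x = R * ∏ j ∈ univ.erase i, (x i - x j) := by simpa using hR (x i)
  rw [funext hR, deriv_const_mul_field, deriv_prod_sub_of_ne, hV, mul_assoc]
  exact fun j hj => hx.ne (ne_of_mem_erase hj).symm

theorem iteratedDeriv_two_vandR_update (hx : Function.Injective x) (i : Fin p) :
    iteratedDeriv 2 (fun t => vandR p (Function.update x i t)) (x i)
      = vandR p x * ∑ j ∈ univ.erase i, ∑ k ∈ (univ.erase i).erase j,
          ((x i - x j) * (x i - x k))⁻¹ := by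
  obtain ⟨R, hR⟩ := exists_vandR_update_eq x i
  have hV : vandR p x = R * ∏ j ∈ univ.erase i, (x i - x j) := by simpa using hR (x i)
  rw [funext hR, iteratedDeriv_const_mul_field, iteratedDeriv_two_prod_sub_of_ne, hV, mul_assoc]
  exact fun j hj => hx.ne (ne_of_mem_erase hj).symm

end Vandermonde

theorem diffOp_vandR_of_injective {p : ℕ} {x : Fin p → ℝ} (hx : Function.Injective x)
    (a b c : ℝ) : diffOp a b (-(2 / 3) * ((p : ℝ) - 2)) c (vandR p) x = 0 := by
  have hpair := two_mul_sum_mul_sum_inv_sub hx (-(2 / 3) * ((p : ℝ) - 2)) c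
  have htriple := three_mul_sum_mul_sum_sum_inv_sub hx a b
  rw [Fintype.card_fin] at hpair htriple
  simp only [diffOp, deriv_vandR_update hx, iteratedDeriv_two_vandR_update hx]
  calc _ = vandR p x * ∑ i, (x i ^ 2 + a * x i + b) *
          ∑ j ∈ univ.erase i, ∑ k ∈ (univ.erase i).erase j, ((x i - x j) * (x i - x k))⁻¹
        + vandR p x * ∑ i, (-(2 / 3) * ((p : ℝ) - 2) * x i + c) *
          ∑ j ∈ univ.erase i, (x i - x j)⁻¹ := by
        rw [mul_sum, mul_sum, ← sum_add_distrib]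
        exact sum_congr rfl fun i _ => by ring
    _ = 0 := by linear_combination (vandR p x / 3) * htriple + (vandR p x / 2) * hpair

theorem vandermonde_harmonic_general (p : ℕ) (a b c : ℝ) :
    ∀ x : Fin p → ℝ,
      ∑ i : Fin p,
        ((x i ^ 2 + a * x i + b)
            * iteratedDeriv 2 (fun t => vandR p (Function.update x i t)) (x i)
          + (-(2 / 3) * ((p : ℝ) - 2) * x i + c)
            * deriv (fun t => vandR p (Function.update x i t)) (x i))
      = 0 := by
  intro x
  have hV : vandR p = fun y => eval y (vandermondePoly ℝ p) :=
    funext fun y => (eval_vandermondePoly y).symm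
  have hpoly : diffOpPoly a b (-(2 / 3) * ((p : ℝ) - 2)) c (vandermondePoly ℝ p) = 0 :=
    eq_zero_of_eval_eq_zero_of_eval_ne_zero vandermondePoly_ne_zero fun y hy => by
      rw [eval_vandermondePoly] at hy
      rw [← diffOp_eval, ← hV]
      exact diffOp_vandR_of_injective (vandR_ne_zero_iff.mp hy) a b c
  change diffOp a b (-(2 / 3) * ((p : ℝ) - 2)) c (vandR p) x = 0
  rw [hV, diffOp_eval, hpoly, map_zero]

/-- König–O'Connell lemma: the Vandermonde polynomial is
harmonic for `G = ∑_i [(x_i² + a·x_i + b)·∂²/∂x_i²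
+ (−(2/3)(p−2)·x_i + c)·∂/∂x_i]`, i.e. `G V = 0`. -/
theorem vandermonde_harmonic (p : ℕ) (hp : 1 ≤ p) (a b c : ℝ) :
    ∀ x : Fin p → ℝ,
      ∑ i : Fin p,
        ((x i ^ 2 + a * x i + b)
            * iteratedDeriv 2 (fun t => vandR p (Function.update x i t)) (x i)
          + (-(2 / 3) * ((p : ℝ) - 2) * x i + c)
            * deriv (fun t => vandR p (Function.update x i t)) (x i))
      = 0 :=
  vandermonde_harmonic_general p a b c
end

section
/- Let p ≥ 1 be an integer, z' > p−1 and w' > −1 real numbers, and λ_1 ≥ λ_2 ≥ ⋯ ≥ λ_p ≥ 0 integers. Set K(i) = i(i+w'+z'+1−p), let 𝒟_{z',w',p} = ∑_{j=1}^{p} [x_j(1−x_j)·∂²/∂x_j² + (w'+1 − (w'+z'−p+2)x_j)·∂/∂x_j], and let W(x_1,…,x_p) = det[Jac^{λ_i+p−i}_{z'−p,w'}(x_j)]_{i,j=1,…,p}. Then 𝒟_{z',w',p} W = −(∑_{j=1}^{p} K(λ_j+p−j)) · W identically. Consequently, the multivariate Jacobi polynomial Jac^λ = W/V, where V = ∏_{i<j}(x_j−x_i),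 satisfies (1/V)·𝒟_{z',w',p}(V·Jac^λ) + K_{p,z',w'}·Jac^λ = (K_{p,z',w'} − ∑_{j=1}^{p} K(λ_j+p−j))·Jac^λ on the set where all x_i are distinct, with K_{p,z',w'} = ∑_{i=0}^{p−1} K(i). -/
open Finset

/-- Pochhammer symbol `(a)_j = a(a+1)⋯(a+j−1)`. -/
noncomputable def poch (a : ℝ) (j : ℕ) : ℝ := ∏ m ∈ Finset.range j, (a + m)

/-- The (shifted) Jacobi polynomial on `(0,1)`:
`Jac^n_{α,β}(x) = ((α+1)_n / n!) · Σ_{j=0}^{n} (−n)_j (n+α+β+1)_j / ((α+1)_j j!) · (1−x)^j`. -/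
noncomputable def jac (n : ℕ) (α β : ℝ) (x : ℝ) : ℝ :=
  poch (α + 1) n / (Nat.factorial n : ℝ)
    * ∑ j ∈ Finset.range (n + 1),
        poch (-(n : ℝ)) j * poch ((n : ℝ) + α + β + 1) j
          / (poch (α + 1) j * (Nat.factorial j : ℝ)) * (1 - x) ^ j

/-- The operator
`𝒟_{z',w',p} = ∑_j [x_j(1−x_j)·∂²/∂x_j² + (w'+1 − (w'+z'−p+2)x_j)·∂/∂x_j]`
applied to a function `f : ℝ^p → ℝ` at the point `x`. -/
noncomputable def Dop (p : ℕ) (z' w' : ℝ) (f : (Fin p → ℝ) → ℝ) (x : Fin p → ℝ) : ℝ :=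
  ∑ j : Fin p,
    (x j * (1 - x j) * iteratedDeriv 2 (fun t => f (Function.update x j t)) (x j)
      + (w' + 1 - (w' + z' - p + 2) * x j)
        * deriv (fun t => f (Function.update x j t)) (x j))

/-- `K(i) = i(i+w'+z'+1−p)`. -/
noncomputable def Kfun (p : ℕ) (z' w' : ℝ) (n : ℕ) : ℝ :=
  (n : ℝ) * ((n : ℝ) + w' + z' + 1 - p)

/-- `W(x_1,…,x_p) = det[Jac^{λ_i+p−i}_{z'−p,w'}(x_j)]_{i,j=1,…,p}`; here `lam i`
stands for `λ_{i+1}`, so the degree `λ_i + p − i` (1-based) is `lam i + (p−1−i)`. -/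
noncomputable def Wdet (p : ℕ) (z' w' : ℝ) (lam : Fin p → ℕ) (x : Fin p → ℝ) : ℝ :=
  Matrix.det (Matrix.of fun i j : Fin p =>
    jac (lam i + (p - 1 - (i : ℕ))) (z' - p) w' (x j))

/-!
Each Jacobi polynomial `Jac^n_{α,β}` is a terminating `₂F₁(-n, n+α+β+1; α+1; 1-x)`, so the
hypergeometric recurrence of its coefficients makes it an eigenfunction of the one-variable
Jacobi operator `x(1-x)∂² + (β+1-(α+β+2)x)∂` with eigenvalue `-n(n+α+β+1)`.
Expanding `W` over permutations, each term is a product of one-variable eigenfunctions in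
distinct variables, and `𝒟` acts on it by the sum of their eigenvalues, which is the same for
every permutation. Finally `V·(W/V)` agrees with `W` near any point where `V ≠ 0`, and `𝒟`
is a local operator.
-/

noncomputable def secondOrderOp (a b f : ℝ → ℝ) (t : ℝ) : ℝ :=
  a t * iteratedDeriv 2 f t + b t * deriv f t

lemma secondOrderOp_fun_sum_const_mul {ι : Type*} (a b : ℝ → ℝ) (s : Finset ι) (c : ι → ℝ)
    (f : ι → ℝ → ℝ) {t : ℝ} (hf : ∀ i ∈ s, ContDiffAt ℝ 2 (f i) t) :
    secondOrderOp a b (fun y => ∑ i ∈ s, c i * f i y) t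
      = ∑ i ∈ s, c i * secondOrderOp a b (f i) t := by
  have hf1 : ∀ i ∈ s, ContDiffAt ℝ 1 (fun y => c i * f i y) t :=
    fun i hi => ((hf i hi).of_le one_le_two).const_smul (c i)
  have hf2 : ∀ i ∈ s, ContDiffAt ℝ 2 (fun y => c i * f i y) t :=
    fun i hi => (hf i hi).const_smul (c i)
  simp only [secondOrderOp, ← iteratedDeriv_one, iteratedDeriv_fun_sum hf1,
    iteratedDeriv_fun_sum hf2, iteratedDeriv_const_mul_field, mul_sum, ← sum_add_distrib]
  exact sum_congr rfl fun i _ => by ring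

noncomputable def jacobiOp (α β : ℝ) : (ℝ → ℝ) → ℝ → ℝ :=
  secondOrderOp (fun x => x * (1 - x)) (fun x => β + 1 - (α + β + 2) * x)

lemma hasDerivAt_one_sub_pow (m : ℕ) (x : ℝ) :
    HasDerivAt (fun x : ℝ => (1 - x) ^ m) (-(m * (1 - x) ^ (m - 1))) x := by
  simpa using ((hasDerivAt_id x).const_sub 1).fun_pow m

lemma jacobiOp_one_sub_pow (α β : ℝ) (m : ℕ) (x : ℝ) :
    jacobiOp α β (fun x : ℝ => (1 - x) ^ m) x
      = m * (m + α) * (1 - x) ^ (m - 1) - m * (m + α + β + 1) * (1 - x) ^ m := by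
  have hderiv : deriv (fun x : ℝ => (1 - x) ^ m) = fun x => -((m : ℝ) * (1 - x) ^ (m - 1)) :=
    funext fun x => (hasDerivAt_one_sub_pow m x).deriv
  have hderiv2 : iteratedDeriv 2 (fun x : ℝ => (1 - x) ^ m) x
      = m * ((m - 1 : ℕ) * (1 - x) ^ (m - 1 - 1)) := by
    rw [iteratedDeriv_succ, iteratedDeriv_one, hderiv]
    simpa using (((hasDerivAt_one_sub_pow (m - 1) x).const_mul (m : ℝ)).neg).deriv
  rw [jacobiOp, secondOrderOp, hderiv2, hderiv]
  rcases m with _ | _ | k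
  · simp
  · norm_num
    ring
  · simp only [Nat.add_sub_cancel]
    push_cast
    ring

lemma jacobiOp_sum_one_sub_pow {α β : ℝ} {n : ℕ} {c : ℕ → ℝ}
    (hc : ∀ j < n, c (j + 1) * ((j + 1) * (j + 1 + α)) = c j * ((j - n) * (j + n + α + β + 1)))
    (x : ℝ) :
    jacobiOp α β (fun x => ∑ j ∈ range (n + 1), c j * (1 - x) ^ j) x
      = -(n * (n + α + β + 1)) * ∑ j ∈ range (n + 1), c j * (1 - x) ^ j := by
  rw [jacobiOp, secondOrderOp_fun_sum_const_mul _ _ _ _ _ fun j _ => by fun_prop, ← jacobiOp]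
  simp only [jacobiOp_one_sub_pow, mul_sub, sum_sub_distrib, mul_sum]
  have hshift : ∑ j ∈ range (n + 1), c j * (j * (j + α) * (1 - x) ^ (j - 1))
      = ∑ j ∈ range (n + 1), c j * ((j - n) * (j + n + α + β + 1)) * (1 - x) ^ j := by
    rw [sum_range_succ', sum_range_succ]
    simp only [Nat.add_sub_cancel, Nat.cast_zero, zero_mul, mul_zero, add_zero, sub_self]
    exact sum_congr rfl fun j hj => by
      rw [← hc j (mem_range.1 hj)]; push_cast; ring
  rw [hshift, ← sub_eq_zero, ← sum_sub_distrib, ← sum_sub_distrib]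
  exact sum_eq_zero fun j _ => by ring

noncomputable def jacCoeff (n : ℕ) (α β : ℝ) (j : ℕ) : ℝ :=
  poch (α + 1) n / (Nat.factorial n : ℝ)
    * (poch (-(n : ℝ)) j * poch ((n : ℝ) + α + β + 1) j
        / (poch (α + 1) j * (Nat.factorial j : ℝ)))

lemma jac_eq_sum_jacCoeff (n : ℕ) (α β : ℝ) :
    jac n α β = fun x => ∑ j ∈ range (n + 1), jacCoeff n α β j * (1 - x) ^ j := by
  ext x
  rw [jac, mul_sum]
  exact sum_congr rfl fun j _ => by rw [jacCoeff]; ring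

lemma poch_succ (a : ℝ) (j : ℕ) : poch a (j + 1) = poch a j * (a + j) :=
  prod_range_succ _ j

lemma poch_pos {a : ℝ} (ha : 0 < a) (j : ℕ) : 0 < poch a j :=
  prod_pos fun m _ => by positivity

lemma jacCoeff_succ_mul {α : ℝ} (hα : -1 < α) (n : ℕ) (β : ℝ) (j : ℕ) :
    jacCoeff n α β (j + 1) * ((j + 1) * (j + 1 + α))
      = jacCoeff n α β j * ((j - n) * (j + n + α + β + 1)) := by
  have hpoch : poch (α + 1) j ≠ 0 := (poch_pos (by linarith) j).ne'
  have hj : α + 1 + j ≠ 0 := (by linarith [j.cast_nonneg (α := ℝ)] : 0 < α + 1 + j).ne'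
  simp only [jacCoeff, poch_succ, Nat.factorial_succ]
  push_cast
  field_simp
  ring

lemma contDiff_jac (n : ℕ) (α β : ℝ) (k : WithTop ℕ∞) : ContDiff ℝ k (jac n α β) := by
  rw [jac_eq_sum_jacCoeff]
  fun_prop

lemma jacobiOp_jac {α : ℝ} (hα : -1 < α) (n : ℕ) (β x : ℝ) :
    jacobiOp α β (jac n α β) x = -(n * (n + α + β + 1)) * jac n α β x := by
  rw [jac_eq_sum_jacCoeff]
  exact jacobiOp_sum_one_sub_pow (fun j _ => jacCoeff_succ_mul hα n β j) x

lemma sign_mul_prod_update {ι : Type*} [Fintype ι] [DecidableEq ι] (f : ι → ℝ → ℝ)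
    (σ : Equiv.Perm ι) (x : ι → ℝ) (j : ι) (t : ℝ) :
    (Equiv.Perm.sign σ : ℝ) * ∏ i, f (σ i) (Function.update x j t i)
      = ((Equiv.Perm.sign σ : ℝ) * ∏ i ∈ univ \ {j}, f (σ i) (x i)) * f (σ j) t := by
  simp only [Function.apply_update (fun i => f (σ i)), prod_update_of_mem (mem_univ j)]
  ring

theorem sum_secondOrderOp_det {ι : Type*} [Fintype ι] [DecidableEq ι] (a b : ℝ → ℝ)
    (f : ι → ℝ → ℝ) (μ : ι → ℝ) (hf : ∀ i, ContDiff ℝ 2 (f i))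
    (hL : ∀ i t, secondOrderOp a b (f i) t = μ i * f i t) (x : ι → ℝ) :
    ∑ j, secondOrderOp a b
        (fun t => (Matrix.of fun i k => f i (Function.update x j t k)).det) (x j)
      = (∑ i, μ i) * (Matrix.of fun i k => f i (x k)).det := by
  simp only [Matrix.det_apply', Matrix.of_apply, sign_mul_prod_update f]
  calc ∑ j, secondOrderOp a b (fun t => ∑ σ : Equiv.Perm ι,
          (Equiv.Perm.sign σ * ∏ i ∈ univ \ {j}, f (σ i) (x i)) * f (σ j) t) (x j)
      = ∑ j, ∑ σ : Equiv.Perm ι, μ (σ j)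
          * ((Equiv.Perm.sign σ * ∏ i ∈ univ \ {j}, f (σ i) (x i)) * f (σ j) (x j)) := by
        refine sum_congr rfl fun j _ => ?_
        rw [secondOrderOp_fun_sum_const_mul _ _ _ _ _ fun σ _ => (hf _).contDiffAt]
        exact sum_congr rfl fun σ _ => by rw [hL]; ring
    _ = ∑ σ : Equiv.Perm ι, (∑ j, μ (σ j)) * (Equiv.Perm.sign σ * ∏ i, f (σ i) (x i)) := by
        rw [sum_comm]
        refine sum_congr rfl fun σ _ => ?_
        rw [sum_mul]
        refine sum_congr rfl fun j _ => ?_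
        rw [← sign_mul_prod_update f σ x j, Function.update_eq_self]
    _ = (∑ i, μ i) * ∑ σ : Equiv.Perm ι, Equiv.Perm.sign σ * ∏ i, f (σ i) (x i) := by
        simp only [Equiv.sum_comp, mul_sum]

lemma Dop_congr_of_eventuallyEq {p : ℕ} {z' w' : ℝ} {F G : (Fin p → ℝ) → ℝ} {x : Fin p → ℝ}
    (hFG : F =ᶠ[nhds x] G) : Dop p z' w' F x = Dop p z' w' G x := by
  refine sum_congr rfl fun j _ => ?_
  have hline : (fun t => F (Function.update x j t)) =ᶠ[nhds (x j)]
      fun t => G (Function.update x j t) := by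
    have hcont : Continuous fun t : ℝ => Function.update x j t :=
      continuous_const.update j continuous_id
    have hlim := hcont.tendsto (x j)
    rw [Function.update_eq_self] at hlim
    exact hFG.comp_tendsto hlim
  rw [hline.iteratedDeriv_eq, hline.deriv_eq]

lemma continuous_vandR (p : ℕ) : Continuous (vandR p) := by
  unfold vandR
  fun_prop

lemma vandR_ne_zero {p : ℕ} {x : Fin p → ℝ} (hx : ∀ i j : Fin p, i ≠ j → x i ≠ x j) :
    vandR p x ≠ 0 :=
  prod_ne_zero_iff.2 fun i _ => prod_ne_zero_iff.2 fun j hj =>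
    sub_ne_zero_of_ne (hx j i (mem_filter.1 hj).2.ne')

lemma Dop_Wdet {p : ℕ} {z' : ℝ} (hz : (p : ℝ) - 1 < z') (w' : ℝ) (lam : Fin p → ℕ)
    (x : Fin p → ℝ) :
    Dop p z' w' (Wdet p z' w' lam) x
      = -(∑ j : Fin p, Kfun p z' w' (lam j + (p - 1 - (j : ℕ)))) * Wdet p z' w' lam x := by
  have hα : -1 < z' - p := by linarith
  have hDop : Dop p z' w' (Wdet p z' w' lam) x
      = ∑ j, jacobiOp (z' - p) w' (fun t => Wdet p z' w' lam (Function.update x j t)) (x j) :=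
    sum_congr rfl fun j _ => by rw [jacobiOp, secondOrderOp]; ring
  rw [hDop, ← sum_neg_distrib]
  refine sum_secondOrderOp_det _ _ _ _ (fun i => contDiff_jac _ _ _ 2) (fun i t => ?_) x
  rw [← jacobiOp, jacobiOp_jac hα, Kfun]
  ring

theorem multivariate_jacobi_eigenfunction_general (p : ℕ)
    (z' w' : ℝ) (hz : z' > (p : ℝ) - 1)
    (lam : Fin p → ℕ) :
    (∀ x : Fin p → ℝ,
      Dop p z' w' (Wdet p z' w' lam) x
        = -(∑ j : Fin p, Kfun p z' w' (lam j + (p - 1 - (j : ℕ))))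
            * Wdet p z' w' lam x)
    ∧ ∀ x : Fin p → ℝ, (∀ i j : Fin p, i ≠ j → x i ≠ x j) →
        (1 / vandR p x)
            * Dop p z' w' (fun y => vandR p y * (Wdet p z' w' lam y / vandR p y)) x
          + (∑ i ∈ Finset.range p, Kfun p z' w' i) * (Wdet p z' w' lam x / vandR p x)
        = ((∑ i ∈ Finset.range p, Kfun p z' w' i)
              - ∑ j : Fin p, Kfun p z' w' (lam j + (p - 1 - (j : ℕ))))
            * (Wdet p z' w' lam x / vandR p x) := by
  refine ⟨Dop_Wdet hz w' lam, fun x hx => ?_⟩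
  have hVW : (fun y => vandR p y * (Wdet p z' w' lam y / vandR p y)) =ᶠ[nhds x]
      Wdet p z' w' lam := by
    filter_upwards [(continuous_vandR p).continuousAt.eventually_ne (vandR_ne_zero hx)]
      with y hy using mul_div_cancel₀ _ hy
  rw [Dop_congr_of_eventuallyEq hVW, Dop_Wdet hz w' lam]
  ring

/-- `𝒟_{z',w',p} W = −(∑_j K(λ_j+p−j))·W`, and consequently the
multivariate Jacobi polynomial `Jac^λ = W/V` satisfies
`(1/V)·𝒟_{z',w',p}(V·Jac^λ) + K_{p,z',w'}·Jac^λ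
  = (K_{p,z',w'} − ∑_j K(λ_j+p−j))·Jac^λ` where all `x_i` are distinct,
with `K_{p,z',w'} = ∑_{i=0}^{p−1} K(i)`. -/
theorem multivariate_jacobi_eigenfunction (p : ℕ) (hp : 1 ≤ p)
    (z' w' : ℝ) (hz : z' > (p : ℝ) - 1) (hw : w' > -1)
    (lam : Fin p → ℕ) (hmono : ∀ i j : Fin p, i ≤ j → lam j ≤ lam i) :
    (∀ x : Fin p → ℝ,
      Dop p z' w' (Wdet p z' w' lam) x
        = -(∑ j : Fin p, Kfun p z' w' (lam j + (p - 1 - (j : ℕ))))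
            * Wdet p z' w' lam x)
    ∧ ∀ x : Fin p → ℝ, (∀ i j : Fin p, i ≠ j → x i ≠ x j) →
        (1 / vandR p x)
            * Dop p z' w' (fun y => vandR p y * (Wdet p z' w' lam y / vandR p y)) x
          + (∑ i ∈ Finset.range p, Kfun p z' w' i) * (Wdet p z' w' lam x / vandR p x)
        = ((∑ i ∈ Finset.range p, Kfun p z' w' i)
              - ∑ j : Fin p, Kfun p z' w' (lam j + (p - 1 - (j : ℕ))))
            * (Wdet p z' w' lam x / vandR p x) :=
  multivariate_jacobi_eigenfunction_general p z' w' hz lam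
end
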